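/- In the cubic-scroll case, setting H = L − D and E = 3L − 4D, one has H^4 = 1, H^3·E = 0, H^2·E^2 = −7, H·E^3 = −32, and E^4 = −84. In particular Y has degree 1 (so Y = ℙ^4) and F has degree 7. -/

import Mathlib

set_option maxHeartbeats 1000000 in
theorem stmt (M : Type*) [AddCommGroup M] [Module ℤ M]
    (B : Module.Basis (Fin 2) ℤ M) (L D : M) (hL : L = B 0) (hD : D = B 1)
    (Φ : M →ₗ[ℤ] M →ₗ[ℤ] M →ₗ[ℤ] M →ₗ[ℤ] ℤ)
    (hsym12 : ∀ a b c d : M, Φ a b c d = Φ b a c d)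
    (hsym23 : ∀ a b c d : M, Φ a b c d = Φ a c b d)
    (hsym34 : ∀ a b c d : M, Φ a b c d = Φ a b d c)
    (hL4 : Φ L L L L = 12) (hL3D : Φ L L L D = 0)
    (hL2D2 : Φ L L D D = -3) (hLD3 : Φ L D D D = -1) (hD4 : Φ D D D D = 3) :
    ∀ H E : M, H = L - D → E = (3:ℤ) • L - (4:ℤ) • D →
      Φ H H H H = 1 ∧ Φ H H H E = 0 ∧ Φ H H E E = -7 ∧
      Φ H E E E = -32 ∧ Φ E E E E = -84 ∧ -(Φ H H E E) = 7 := by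
  intro H E hH hE
  have f1 : Φ L L D L = 0 := by rw [hsym34 L L D L]; exact hL3D
  have f2 : Φ L D L L = 0 := by rw [hsym23 L D L L, hsym34 L L D L]; exact hL3D
  have f3 : Φ D L L L = 0 := by
    rw [hsym12 D L L L, hsym23 L D L L, hsym34 L L D L]; exact hL3D
  have g1 : Φ L D L D = -3 := by rw [hsym23 L D L D]; exact hL2D2
  have g2 : Φ L D D L = -3 := by rw [hsym34 L D D L, hsym23 L D L D]; exact hL2D2
  have g3 : Φ D L L D = -3 := by rw [hsym12 D L L D, hsym23 L D L D]; exact hL2D2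
  have g4 : Φ D L D L = -3 := by
    rw [hsym12 D L D L, hsym34 L D D L, hsym23 L D L D]; exact hL2D2
  have g5 : Φ D D L L = -3 := by
    rw [hsym23 D D L L, hsym12 D L D L, hsym34 L D D L, hsym23 L D L D]; exact hL2D2
  have k1 : Φ D L D D = -1 := by rw [hsym12 D L D D]; exact hLD3
  have k2 : Φ D D L D = -1 := by rw [hsym23 D D L D, hsym12 D L D D]; exact hLD3
  have k3 : Φ D D D L = -1 := by
    rw [hsym34 D D D L, hsym23 D D L D, hsym12 D L D D]; exact hLD3
  subst hH hE
  simp only [map_sub, map_smul, map_zsmul, LinearMap.sub_apply, LinearMap.smul_apply,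
    smul_eq_mul, hL4, hL3D, hL2D2, hLD3, hD4, f1, f2, f3, g1, g2, g3, g4, g5,
    k1, k2, k3]
  norm_num
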